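/- Let A : ℝⁿ → ℝᵐ be linear, y^δ ∈ ℝᵐ, β ≥ 0, λ > 0, R > 0, x ∈ ℝⁿ, and define Φ_λ(w, x) = ½‖Aw − y^δ‖₂² − β‖w‖₂ − ½‖A(w − x)‖₂² + (λ/2)‖w − x‖₂². If ŵ ≠ 0 is a minimizer of w ↦ Φ_λ(w, x) over B_R = {w ∈ ℝⁿ : ‖w‖₁ ≤ R}, then ŵ satisfies the fixed-point equation ŵ = P_R( x + βŵ/(λ‖ŵ‖₂) − (1/λ)Aᵀ(Ax − y^δ) ). -/

import Mathlib

open scoped RealInnerProductSpace BigOperators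
open Filter

noncomputable section

/-- The `ℓ¹`-norm on `ℝⁿ`. -/
def l1E {n : ℕ} (x : EuclideanSpace ℝ (Fin n)) : ℝ := ∑ i, |x i|

/-- The `ℓ¹`-ball `B_R = {x ∈ ℝⁿ : ‖x‖₁ ≤ R}`. -/
def BRE (n : ℕ) (R : ℝ) : Set (EuclideanSpace ℝ (Fin n)) := {x | l1E x ≤ R}

/-- `p` is the Euclidean projection of `a` onto the set `S`. -/
def IsProjE {n : ℕ} (S : Set (EuclideanSpace ℝ (Fin n)))
    (a p : EuclideanSpace ℝ (Fin n)) : Prop :=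
  p ∈ S ∧ ∀ z ∈ S, ‖p - a‖ ≤ ‖z - a‖

/-- The surrogate functional
`Φ_λ(w, x) = ½‖Aw − y^δ‖₂² − β‖w‖₂ − ½‖A(w − x)‖₂² + (λ/2)‖w − x‖₂²`. -/
def Phi {n m : ℕ} (A : EuclideanSpace ℝ (Fin n) →L[ℝ] EuclideanSpace ℝ (Fin m))
    (yδ : EuclideanSpace ℝ (Fin m)) (β lam : ℝ)
    (w x : EuclideanSpace ℝ (Fin n)) : ℝ :=
  (1 / 2) * ‖A w - yδ‖ ^ 2 - β * ‖w‖ - (1 / 2) * ‖A (w - x)‖ ^ 2 +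
    (lam / 2) * ‖w - x‖ ^ 2

set_option maxHeartbeats 1000000 in
/-- Key algebraic identity relating `Φ` to the squared distance to the
fixed-point target. -/
theorem key_identity {n m : ℕ}
    (A : EuclideanSpace ℝ (Fin n) →L[ℝ] EuclideanSpace ℝ (Fin m))
    (yδ : EuclideanSpace ℝ (Fin m)) (β lam : ℝ) (hlam : lam ≠ 0)
    (x what z : EuclideanSpace ℝ (Fin n)) (hw : ‖what‖ ≠ 0) :
    lam/2 * ‖z - (x + (β / (lam * ‖what‖)) • what -
        (1 / lam) • ContinuousLinearMap.adjoint A (A x - yδ))‖^2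
    - lam/2 * ‖what - (x + (β / (lam * ‖what‖)) • what -
        (1 / lam) • ContinuousLinearMap.adjoint A (A x - yδ))‖^2
    = (Phi A yδ β lam z x - Phi A yδ β lam what x)
      + (β * ‖z‖ - (β / ‖what‖) * ⟪what, z⟫) := by
  have hws : ⟪what, what⟫ = ‖what‖ ^ 2 := real_inner_self_eq_norm_sq what
  simp only [Phi]
  simp only [← real_inner_self_eq_norm_sq, map_sub, map_add, map_smul]
  simp only [inner_sub_left, inner_sub_right, inner_add_left, inner_add_right,
    inner_smul_left, inner_smul_right, ContinuousLinearMap.adjoint_inner_left,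
    ContinuousLinearMap.adjoint_inner_right,
    map_sub, map_add, map_smul, RCLike.conj_to_real]
  rw [real_inner_comm x z, real_inner_comm x what, real_inner_comm what z,
    real_inner_comm (A x) (A z), real_inner_comm (A x) (A what),
    real_inner_comm yδ (A z), real_inner_comm yδ (A what), real_inner_comm yδ (A x)]
  rw [hws]
  field_simp
  ring

/-- if `ŵ ≠ 0` minimizes `w ↦ Φ_λ(w, x)` over the `ℓ¹`-ball
`B_R`, then `ŵ` satisfies the fixed-point equation
`ŵ = P_R(x + βŵ/(λ‖ŵ‖₂) − (1/λ)Aᵀ(Ax − y^δ))`. -/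
theorem stmt10 {n m : ℕ}
    (A : EuclideanSpace ℝ (Fin n) →L[ℝ] EuclideanSpace ℝ (Fin m))
    (yδ : EuclideanSpace ℝ (Fin m)) (β lam R : ℝ) (hβ : 0 ≤ β) (hlam : 0 < lam)
    (hR : 0 < R) (x : EuclideanSpace ℝ (Fin n))
    (what : EuclideanSpace ℝ (Fin n)) (hw0 : what ≠ 0) (hmem : what ∈ BRE n R)
    (hmin : ∀ w ∈ BRE n R, Phi A yδ β lam what x ≤ Phi A yδ β lam w x) :
    IsProjE (BRE n R)
      (x + (β / (lam * ‖what‖)) • what -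
        (1 / lam) • ContinuousLinearMap.adjoint A (A x - yδ)) what := by
  have hw : ‖what‖ ≠ 0 := norm_ne_zero_iff.mpr hw0
  have hwpos : (0:ℝ) < ‖what‖ := norm_pos_iff.mpr hw0
  refine ⟨hmem, fun z hz => ?_⟩
  have key := key_identity A yδ β lam (ne_of_gt hlam) x what z hw
  have h1 : Phi A yδ β lam what x ≤ Phi A yδ β lam z x := hmin z hz
  have h2 : (β / ‖what‖) * ⟪what, z⟫ ≤ β * ‖z‖ := by
    have hcs : ⟪what, z⟫ ≤ ‖what‖ * ‖z‖ := real_inner_le_norm what z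
    have hnn : 0 ≤ β / ‖what‖ := div_nonneg hβ (le_of_lt hwpos)
    calc (β / ‖what‖) * ⟪what, z⟫ ≤ (β / ‖what‖) * (‖what‖ * ‖z‖) :=
          mul_le_mul_of_nonneg_left hcs hnn
      _ = β * ‖z‖ := by field_simp
  have hsq : ‖what - (x + (β / (lam * ‖what‖)) • what -
      (1 / lam) • ContinuousLinearMap.adjoint A (A x - yδ))‖ ^ 2 ≤
      ‖z - (x + (β / (lam * ‖what‖)) • what -
      (1 / lam) • ContinuousLinearMap.adjoint A (A x - yδ))‖ ^ 2 := by
    nlinarith [key, h1, h2, hlam]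
  nlinarith [norm_nonneg (what - (x + (β / (lam * ‖what‖)) • what -
    (1 / lam) • ContinuousLinearMap.adjoint A (A x - yδ))),
    norm_nonneg (z - (x + (β / (lam * ‖what‖)) • what -
    (1 / lam) • ContinuousLinearMap.adjoint A (A x - yδ))), hsq]
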